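/- arXiv:1909.07650 — 7 statements merged into one kernel-verified Lean document; each statement's English description precedes it below -/
import Mathlib

section
/- Maximin share monotonicity under removal: if T = (T_1,…,T_n) is an n-maximin-share defining partition of M for agent i (i.e., min_j v_i(T_j) = μ_i(n, M)), and S is any set of goods contained in some single bundle T_j, then μ_i(n−1, M \ S) ≥ μ_i(n, M). -/
open Finset

variable {G : Type*} [DecidableEq G]

/-- `P : Fin n → Finset G` is a partition of `S` into `n` (possibly empty) bundles. -/
def IsPartition {G : Type*} [DecidableEq G] {n : ℕ} (P : Fin n → Finset G) (S : Finset G) : Prop :=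
  (∀ i j : Fin n, i ≠ j → Disjoint (P i) (P j)) ∧ Finset.univ.biUnion P = S

/-- The `n`-maximin share of valuation `v` on the set of goods `S`:
the maximum over partitions of `S` into `n` bundles of the minimum bundle value. -/
noncomputable def mms {G : Type*} [DecidableEq G] (v : G → ℝ) (n : ℕ) (S : Finset G) : ℝ :=
  sSup ((fun P : Fin n → Finset G => ⨅ i, (P i).sum v) '' {P | IsPartition P S})

lemma bdd_mms (v : G → ℝ) (hv : ∀ g, 0 ≤ v g) {k : ℕ} (hk : 0 < k) (R : Finset G) :
    BddAbove ((fun P : Fin k → Finset G => ⨅ i, (P i).sum v) '' {P | IsPartition P R}) := by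
  refine ⟨R.sum v, ?_⟩
  rintro x ⟨P, hP, rfl⟩
  have i0 : Fin k := ⟨0, hk⟩
  have hsub : P i0 ⊆ R := by
    rw [← hP.2]; exact Finset.subset_biUnion_of_mem P (Finset.mem_univ i0)
  have hb : BddBelow (Set.range fun i => (P i).sum v) := (Set.finite_range _).bddBelow
  exact (ciInf_le hb i0).trans
    (Finset.sum_le_sum_of_subset_of_nonneg hsub (fun g _ _ => hv g))

theorem stmt3 (v : G → ℝ) (hv : ∀ g, 0 ≤ v g) {n : ℕ} (hn : 2 ≤ n) (M : Finset G)
    (T : Fin n → Finset G) (hT : IsPartition T M)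
    (hdef : (⨅ i, (T i).sum v) = mms v n M)
    (S : Finset G) (j : Fin n) (hS : S ⊆ T j) :
    mms v n M ≤ mms v (n - 1) (M \ S) := by
  obtain ⟨m, rfl⟩ : ∃ m, n = m + 1 := ⟨n - 1, (Nat.succ_pred_eq_of_pos (by omega)).symm⟩
  have hm : 0 < m := by omega
  have hred : m + 1 - 1 = m := rfl
  rw [hred]
  set k0 : Fin m := ⟨0, hm⟩
  set P : Fin m → Finset G := fun k =>
    T (j.succAbove k) ∪ (if k = k0 then T j \ S else ∅) with hPdef
  have hTjM : T j ⊆ M := by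
    rw [← hT.2]; exact Finset.subset_biUnion_of_mem T (Finset.mem_univ j)
  -- disjointness
  have hdisj : ∀ a b : Fin m, a ≠ b → Disjoint (P a) (P b) := by
    intro a b hab
    have hinj := (Fin.succAbove_right_injective (p := j)).ne hab
    apply Finset.disjoint_union_left.2
    constructor
    · apply Finset.disjoint_union_right.2
      refine ⟨hT.1 _ _ hinj, ?_⟩
      split
      · exact Finset.disjoint_of_subset_right (Finset.sdiff_subset)
          (hT.1 _ _ (Fin.succAbove_ne j a))
      · exact Finset.disjoint_empty_right _
    · apply Finset.disjoint_union_right.2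
      constructor
      · split
        · exact Finset.disjoint_of_subset_left (Finset.sdiff_subset)
            ((hT.1 _ _ (Fin.succAbove_ne j b)).symm)
        · exact Finset.disjoint_empty_left _
      · rcases eq_or_ne b k0 with rfl | hb
        · rw [if_neg (by exact fun h => hab h)]
          exact Finset.disjoint_empty_left _
        · rw [if_neg hb]; exact Finset.disjoint_empty_right _
  -- union
  have hunion : Finset.univ.biUnion P = M \ S := by
    ext g
    simp only [Finset.mem_biUnion, Finset.mem_univ, true_and, Finset.mem_sdiff, hPdef,
      Finset.mem_union]
    constructor
    · rintro ⟨k, hk⟩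
      rcases hk with hk | hk
      · have hgM : g ∈ M := by
          rw [← hT.2]; exact Finset.mem_biUnion.2 ⟨_, Finset.mem_univ _, hk⟩
        have hgj : g ∉ T j := fun hgj =>
          (hT.1 _ _ (Fin.succAbove_ne j k)).forall_ne_finset hk hgj rfl
        exact ⟨hgM, fun hgS => hgj (hS hgS)⟩
      · split at hk
        · rw [Finset.mem_sdiff] at hk
          exact ⟨hTjM hk.1, hk.2⟩
        · simp at hk
    · rintro ⟨hgM, hgS⟩
      rw [← hT.2] at hgM
      obtain ⟨i, -, hgi⟩ := Finset.mem_biUnion.1 hgM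
      rcases eq_or_ne i j with rfl | hij
      · exact ⟨k0, Or.inr (by rw [if_pos rfl]; exact Finset.mem_sdiff.2 ⟨hgi, hgS⟩)⟩
      · obtain ⟨k, rfl⟩ := Fin.exists_succAbove_eq hij
        exact ⟨k, Or.inl hgi⟩
  have hbT : BddBelow (Set.range fun i => (T i).sum v) := (Set.finite_range _).bddBelow
  haveI : Nonempty (Fin m) := ⟨k0⟩
  have hle : (⨅ i, (T i).sum v) ≤ ⨅ k, (P k).sum v := by
    refine le_ciInf fun k => ?_
    refine (ciInf_le hbT (j.succAbove k)).trans ?_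
    exact Finset.sum_le_sum_of_subset_of_nonneg Finset.subset_union_left (fun g _ _ => hv g)
  calc mms v (m + 1) M = ⨅ i, (T i).sum v := hdef.symm
    _ ≤ ⨅ k, (P k).sum v := hle
    _ ≤ mms v m (M \ S) := le_csSup (bdd_mms v hv hm _) ⟨P, ⟨hdisj, hunion⟩, rfl⟩
end

section
/- Let T = {g₁, g₂, g₃, g₄} be four distinct goods with v(g₁) ≥ v(g₂) ≥ v(g₃) ≥ v(g₄) under a nonnegative additive valuation v. Then v({g₁, g₄}) ≥ μ(2, T), where μ(2, T) is the 2-maximin share of T. -/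
open Finset

variable {G : Type*} [DecidableEq G]

private lemma sum_pair_le (v : G → ℝ) (hv : ∀ g, 0 ≤ v g) {S : Finset G} {a b : G}
    (hS : S ⊆ {a, b}) : S.sum v ≤ v a + v b := by
  calc S.sum v ≤ ({a, b} : Finset G).sum v :=
        Finset.sum_le_sum_of_subset_of_nonneg hS (fun g _ _ => hv g)
    _ ≤ v a + v b := by
        by_cases hab : a = b
        · subst hab; simp [hv a]
        · rw [Finset.sum_pair hab]

private lemma key (v : G → ℝ) (hv : ∀ g, 0 ≤ v g) (g₁ g₂ g₃ g₄ : G)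
    (h12 : v g₂ ≤ v g₁) (h23 : v g₃ ≤ v g₂) (h34 : v g₄ ≤ v g₃)
    (A B : Finset G) (hg₁ : g₁ ∈ A) (hdisj : Disjoint A B)
    (hA : A ⊆ {g₁, g₂, g₃, g₄}) (hB : B ⊆ {g₁, g₂, g₃, g₄})
    (hcov : ∀ x ∈ ({g₁, g₂, g₃, g₄} : Finset G), x ∈ A ∨ x ∈ B) :
    A.sum v ≤ v g₁ + v g₄ ∨ B.sum v ≤ v g₁ + v g₄ := by
  have hg₁B : g₁ ∉ B := Finset.disjoint_left.1 hdisj hg₁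
  rcases hcov g₂ (by simp) with h2A | h2B
  · right
    have hsub : B ⊆ {g₃, g₄} := by
      intro x hx
      have hx1 : x ≠ g₁ := fun h => hg₁B (h ▸ hx)
      have hx2 : x ≠ g₂ := fun h => Finset.disjoint_left.1 hdisj h2A (h ▸ hx)
      have := hB hx
      simp only [Finset.mem_insert, Finset.mem_singleton] at this ⊢
      tauto
    have := sum_pair_le v hv hsub
    linarith
  · rcases hcov g₃ (by simp) with h3A | h3B
    · right
      have hsub : B ⊆ {g₂, g₄} := by
        intro x hx
        have hx1 : x ≠ g₁ := fun h => hg₁B (h ▸ hx)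
        have hx3 : x ≠ g₃ := fun h => Finset.disjoint_left.1 hdisj h3A (h ▸ hx)
        have := hB hx
        simp only [Finset.mem_insert, Finset.mem_singleton] at this ⊢
        tauto
      have := sum_pair_le v hv hsub
      linarith
    · left
      have hsub : A ⊆ {g₁, g₄} := by
        intro x hx
        have hx2 : x ≠ g₂ := fun h => Finset.disjoint_left.1 hdisj hx (h ▸ h2B)
        have hx3 : x ≠ g₃ := fun h => Finset.disjoint_left.1 hdisj hx (h ▸ h3B)
        have := hA hx
        simp only [Finset.mem_insert, Finset.mem_singleton] at this ⊢
        tauto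
      exact sum_pair_le v hv hsub

theorem stmt6 (v : G → ℝ) (hv : ∀ g, 0 ≤ v g) (g₁ g₂ g₃ g₄ : G)
    (hd : ({g₁, g₂, g₃, g₄} : Finset G).card = 4)
    (h12 : v g₂ ≤ v g₁) (h23 : v g₃ ≤ v g₂) (h34 : v g₄ ≤ v g₃) :
    mms v 2 {g₁, g₂, g₃, g₄} ≤ v g₁ + v g₄ := by
  apply Real.sSup_le
  · rintro x ⟨P, ⟨hdisj, hcover⟩, rfl⟩
    have hsubk : ∀ k : Fin 2, P k ⊆ {g₁, g₂, g₃, g₄} := by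
      intro k x hx
      rw [← hcover]
      exact Finset.mem_biUnion.2 ⟨k, Finset.mem_univ k, hx⟩
    have hcov : ∀ x ∈ ({g₁, g₂, g₃, g₄} : Finset G), x ∈ P 0 ∨ x ∈ P 1 := by
      intro x hx
      rw [← hcover] at hx
      obtain ⟨k, _, hk⟩ := Finset.mem_biUnion.1 hx
      fin_cases k
      · exact Or.inl hk
      · exact Or.inr hk
    have hbdd : BddBelow (Set.range fun i : Fin 2 => (P i).sum v) :=
      (Set.finite_range _).bddBelow
    have hle : ∀ i : Fin 2, (P i).sum v ≤ v g₁ + v g₄ → ⨅ i, (P i).sum v ≤ v g₁ + v g₄ :=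
      fun i h => le_trans (ciInf_le hbdd i) h
    rcases hcov g₁ (by simp) with h1 | h1
    · rcases key v hv g₁ g₂ g₃ g₄ h12 h23 h34 (P 0) (P 1) h1
        (hdisj 0 1 (by decide)) (hsubk 0) (hsubk 1) hcov with h | h
      · exact hle 0 h
      · exact hle 1 h
    · rcases key v hv g₁ g₂ g₃ g₄ h12 h23 h34 (P 1) (P 0) h1
        (hdisj 1 0 (by decide)) (hsubk 1) (hsubk 0)
        (fun x hx => (hcov x hx).symm) with h | h
      · exact hle 1 h
      · exact hle 0 h
  · have := hv g₁; have := hv g₄; linarith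
end

section
/- Let T = {g₁, g₂, g₃, g₄} be four distinct goods with v(g₁) ≥ v(g₂) ≥ v(g₃) ≥ v(g₄) under a nonnegative additive valuation v. Then max{v(g₁), v({g₂, g₃})} ≥ μ(2, T). -/
open Finset

variable {G : Type*} [DecidableEq G]

theorem stmt7 (v : G → ℝ) (hv : ∀ g, 0 ≤ v g) (g₁ g₂ g₃ g₄ : G)
    (hd : ({g₁, g₂, g₃, g₄} : Finset G).card = 4)
    (h12 : v g₂ ≤ v g₁) (h23 : v g₃ ≤ v g₂) (h34 : v g₄ ≤ v g₃) :
    mms v 2 {g₁, g₂, g₃, g₄} ≤ max (v g₁) (v g₂ + v g₃) := by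
  -- distinctness
  have hcard3 : ∀ a b c : G, ({a, b, c} : Finset G).card ≤ 3 := by
    intro a b c
    calc ({a, b, c} : Finset G).card ≤ ({b, c} : Finset G).card + 1 :=
          Finset.card_insert_le _ _
      _ ≤ (({c} : Finset G).card + 1) + 1 := by
          exact Nat.add_le_add_right (Finset.card_insert_le _ _) 1
      _ ≤ 3 := by simp
  have h1ne : g₁ ∉ ({g₂, g₃, g₄} : Finset G) := by
    intro h
    rw [show ({g₁, g₂, g₃, g₄} : Finset G) = {g₂, g₃, g₄} from
      Finset.insert_eq_self.mpr h] at hd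
    have := hcard3 g₂ g₃ g₄; omega
  have hne12 : g₁ ≠ g₂ := by intro h; exact h1ne (by simp [h])
  have hne13 : g₁ ≠ g₃ := by intro h; exact h1ne (by simp [h])
  have hne14 : g₁ ≠ g₄ := by intro h; exact h1ne (by simp [h])
  have hne23 : g₂ ≠ g₃ := by
    intro h; subst h
    have : ({g₁, g₂, g₂, g₄} : Finset G) = {g₁, g₂, g₄} := by
      ext x; simp
    rw [this] at hd
    have := hcard3 g₁ g₂ g₄; omega
  have hne24 : g₂ ≠ g₄ := by
    intro h; subst h
    have : ({g₁, g₂, g₃, g₂} : Finset G) = {g₁, g₂, g₃} := by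
      ext x; simp; tauto
    rw [this] at hd
    have := hcard3 g₁ g₂ g₃; omega
  have hne34 : g₃ ≠ g₄ := by
    intro h; subst h
    have : ({g₁, g₂, g₃, g₃} : Finset G) = {g₁, g₂, g₃} := by
      ext x; simp
    rw [this] at hd
    have := hcard3 g₁ g₂ g₃; omega
  have hmax0 : (0 : ℝ) ≤ max (v g₁) (v g₂ + v g₃) := le_max_of_le_left (hv g₁)
  apply Real.sSup_le _ hmax0
  rintro x ⟨P, ⟨hdisj, hunion⟩, rfl⟩
  simp only
  have hbdd : BddBelow (Set.range fun i : Fin 2 => (P i).sum v) :=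
    (Set.finite_range _).bddBelow
  have hle : ∀ i : Fin 2, (⨅ k, (P k).sum v) ≤ (P i).sum v := fun i => ciInf_le hbdd i
  have hsub : ∀ i : Fin 2, P i ⊆ ({g₁, g₂, g₃, g₄} : Finset G) := by
    intro i x hx
    rw [← hunion]
    exact Finset.mem_biUnion.mpr ⟨i, Finset.mem_univ i, hx⟩
  have hmem : ∀ g, g ∈ ({g₁, g₂, g₃, g₄} : Finset G) → g ∈ P 0 ∨ g ∈ P 1 := by
    intro g hg
    rw [← hunion] at hg
    obtain ⟨i, _, hi⟩ := Finset.mem_biUnion.mp hg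
    fin_cases i
    · exact Or.inl hi
    · exact Or.inr hi
  have main : ∀ i j : Fin 2, i ≠ j → g₁ ∈ P i →
      (⨅ k, (P k).sum v) ≤ max (v g₁) (v g₂ + v g₃) := by
    intro i j hij hg1
    have hdij := hdisj i j hij
    have hg1nj : g₁ ∉ P j := fun h => (Finset.disjoint_left.mp hdij hg1) h
    have hsubj : P j ⊆ ({g₂, g₃, g₄} : Finset G) := by
      intro x hx
      have := hsub j hx
      simp only [Finset.mem_insert, Finset.mem_singleton] at this ⊢
      rcases this with h | h
      · exact absurd (h ▸ hx) hg1nj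
      · exact h
    by_cases hall : g₂ ∈ P j ∧ g₃ ∈ P j ∧ g₄ ∈ P j
    · -- P i ⊆ {g₁}
      have hsubi : P i ⊆ ({g₁} : Finset G) := by
        intro x hx
        have hdji := Finset.disjoint_right.mp hdij
        have := hsub i hx
        simp only [Finset.mem_insert, Finset.mem_singleton] at this ⊢
        rcases this with h | h | h | h
        · exact h
        · exact absurd hx (h ▸ fun hh => hdji hall.1 hh)
        · exact absurd hx (h ▸ fun hh => hdji hall.2.1 hh)
        · exact absurd hx (h ▸ fun hh => hdji hall.2.2 hh)
      have : (P i).sum v ≤ v g₁ := by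
        have := Finset.sum_le_sum_of_subset_of_nonneg hsubi
          (fun x _ _ => hv x)
        simpa using this
      exact le_trans (hle i) (le_trans this (le_max_left _ _))
    · -- some good missing from P j
      push_neg at hall
      have hkey : (P j).sum v ≤ v g₂ + v g₃ := by
        by_cases h2 : g₂ ∈ P j
        · by_cases h3 : g₃ ∈ P j
          · -- g₄ ∉ P j, P j ⊆ {g₂, g₃}
            have h4 := hall h2 h3
            have hsub' : P j ⊆ ({g₂, g₃} : Finset G) := by
              intro x hx
              have := hsubj hx
              simp only [Finset.mem_insert, Finset.mem_singleton] at this ⊢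
              rcases this with h | h | h
              · exact Or.inl h
              · exact Or.inr h
              · exact absurd (h ▸ hx) h4
            have := Finset.sum_le_sum_of_subset_of_nonneg hsub'
              (fun x _ _ => hv x)
            rwa [Finset.sum_pair hne23] at this
          · -- g₃ ∉ P j, P j ⊆ {g₂, g₄}
            have hsub' : P j ⊆ ({g₂, g₄} : Finset G) := by
              intro x hx
              have := hsubj hx
              simp only [Finset.mem_insert, Finset.mem_singleton] at this ⊢
              rcases this with h | h | h
              · exact Or.inl h
              · exact absurd (h ▸ hx) h3
              · exact Or.inr h
            have hs := Finset.sum_le_sum_of_subset_of_nonneg hsub'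
              (fun x _ _ => hv x)
            rw [Finset.sum_pair hne24] at hs
            linarith
        · -- g₂ ∉ P j, P j ⊆ {g₃, g₄}
          have hsub' : P j ⊆ ({g₃, g₄} : Finset G) := by
            intro x hx
            have := hsubj hx
            simp only [Finset.mem_insert, Finset.mem_singleton] at this ⊢
            rcases this with h | h | h
            · exact absurd (h ▸ hx) h2
            · exact Or.inl h
            · exact Or.inr h
          have hs := Finset.sum_le_sum_of_subset_of_nonneg hsub'
            (fun x _ _ => hv x)
          rw [Finset.sum_pair hne34] at hs
          linarith
      exact le_trans (hle j) (le_trans hkey (le_max_right _ _))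
  have hg1T : g₁ ∈ ({g₁, g₂, g₃, g₄} : Finset G) := by simp
  rcases hmem g₁ hg1T with h | h
  · exact main 0 1 (by decide) h
  · exact main 1 0 (by decide) h
end

section
/- If the number of goods is at most the number of agents (m ≤ n), then any allocation that gives each agent at most one good is a GMMS allocation: for every subset S of agents and every agent i ∈ S, v_i(A_i) ≥ μ_i(|S|, ∪_{j∈S} A_j). -/
open Finset

variable {G : Type*} [DecidableEq G]

/-! Let `R = ⋃_{j ∈ S} A_j` and `k = |S|`. Since every `A_j` has at most one good,
`R \ A_i ⊆ ⋃_{j ∈ S \ {i}} A_j` has fewer than `k` goods. Hence among the `k` disjoint bundles of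
any partition of `R` some bundle has no good outside `A_i`, i.e. lies inside `A_i`; for nonnegative
valuations its value, and so the minimum bundle value, is at most `v_i(A_i)`. -/

theorem Finset.card_le_card_biUnion_sdiff {ι α : Type*} [DecidableEq α] {s : Finset ι}
    {P : ι → Finset α} (hP : (s : Set ι).PairwiseDisjoint P) (B : Finset α)
    (hB : ∀ l ∈ s, ¬ P l ⊆ B) : s.card ≤ (s.biUnion P \ B).card := by
  have hdisj : (s : Set ι).PairwiseDisjoint (P · \ B) :=
    hP.mono fun l => sdiff_subset
  calc s.card ≤ (s.biUnion (P · \ B)).card :=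
        card_le_card_biUnion hdisj fun l hl => sdiff_nonempty.mpr (hB l hl)
    _ ≤ (s.biUnion P \ B).card :=
        card_le_card (biUnion_subset.mpr fun l hl => sdiff_subset_sdiff (subset_biUnion_of_mem P hl)
          subset_rfl)

theorem Finset.card_biUnion_sdiff_lt {ι : Type*} [DecidableEq ι] {A : ι → Finset G}
    (hA : ∀ j, (A j).card ≤ 1) {S : Finset ι} {i : ι} (hi : i ∈ S) :
    (S.biUnion A \ A i).card < S.card := by
  have hsub : S.biUnion A \ A i ⊆ (S.erase i).biUnion A := by
    intro g hg
    obtain ⟨hgS, hgi⟩ := mem_sdiff.mp hg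
    obtain ⟨j, hj, hgj⟩ := mem_biUnion.mp hgS
    exact mem_biUnion.mpr ⟨j, mem_erase.mpr ⟨fun hji => hgi (hji ▸ hgj), hj⟩, hgj⟩
  calc (S.biUnion A \ A i).card ≤ ((S.erase i).biUnion A).card := card_le_card hsub
    _ ≤ ∑ j ∈ S.erase i, (A j).card := card_biUnion_le
    _ ≤ ∑ _j ∈ S.erase i, 1 := sum_le_sum fun j _ => hA j
    _ < S.card := by simpa using card_erase_lt_of_mem hi

theorem IsPartition.exists_subset_of_card_sdiff_lt {k : ℕ} {P : Fin k → Finset G} {R : Finset G}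
    (hP : IsPartition P R) {B : Finset G} (hB : (R \ B).card < k) : ∃ l, P l ⊆ B := by
  by_contra! h
  have hdisj : ((univ : Finset (Fin k)) : Set (Fin k)).PairwiseDisjoint P :=
    fun a _ b _ hab => hP.1 a b hab
  have := card_le_card_biUnion_sdiff hdisj B fun l _ => h l
  rw [hP.2, card_univ, Fintype.card_fin] at this
  omega

theorem mms_le_of_forall_exists {v : G → ℝ} {k : ℕ} {R : Finset G} {b : ℝ} (hb : 0 ≤ b)
    (h : ∀ P : Fin k → Finset G, IsPartition P R → ∃ l, (P l).sum v ≤ b) : mms v k R ≤ b := by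
  refine Real.sSup_le ?_ hb
  rintro _ ⟨P, hP, rfl⟩
  obtain ⟨l, hl⟩ := h P hP
  exact (ciInf_le (Set.finite_range _).bddBelow l).trans hl

theorem stmt8_general {n : ℕ}
    (v : Fin n → G → ℝ) (hv : ∀ i g, 0 ≤ v i g)
    (A : Fin n → Finset G) (hone : ∀ j, (A j).card ≤ 1) :
    ∀ S : Finset (Fin n), ∀ i ∈ S,
      mms (v i) S.card (S.biUnion A) ≤ (A i).sum (v i) := by
  intro S i hi
  refine mms_le_of_forall_exists (sum_nonneg fun g _ => hv i g) fun P hP => ?_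
  obtain ⟨l, hl⟩ := hP.exists_subset_of_card_sdiff_lt (card_biUnion_sdiff_lt hone hi)
  exact ⟨l, sum_le_sum_of_subset_of_nonneg hl fun g _ _ => hv i g⟩

theorem stmt8 {n : ℕ} (M : Finset G) (hm : M.card ≤ n)
    (v : Fin n → G → ℝ) (hv : ∀ i g, 0 ≤ v i g)
    (A : Fin n → Finset G) (hA : IsPartition A M) (hone : ∀ j, (A j).card ≤ 1) :
    ∀ S : Finset (Fin n), ∀ i ∈ S,
      mms (v i) S.card (S.biUnion A) ≤ (A i).sum (v i) :=
  stmt8_general v hv A hone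
end

section
/- Suppose agents i and j hold bundles A_i and A_j, |A_j| ≥ 1, and there is a good g* ∈ A_i with v_i(g*) ≥ v_i(h) for every h ∈ A_j. If |A_j| = 2 then v_i(A_i) ≥ μ_i(2, A_i ∪ A_j). (Pairwise maximin share guarantee when i owns a good at least as valuable as everything in j's 2-good bundle.) -/
open Finset

variable {G : Type*} [DecidableEq G]

theorem stmt9 (v : G → ℝ) (hv : ∀ g, 0 ≤ v g) (Ai Aj : Finset G)
    (hdisj : Disjoint Ai Aj) (hcard : Aj.card = 2)
    (gstar : G) (hg : gstar ∈ Ai) (hmax : ∀ h ∈ Aj, v h ≤ v gstar) :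
    mms v 2 (Ai ∪ Aj) ≤ Ai.sum v := by
  obtain ⟨h1, h2, hne, hAj⟩ := Finset.card_eq_two.mp hcard
  have hAinn : 0 ≤ Ai.sum v := Finset.sum_nonneg (fun g _ => hv g)
  apply Real.sSup_le _ hAinn
  rintro x ⟨P, hP, rfl⟩
  obtain ⟨hPdisj, hPcov⟩ := hP
  have notmem : ∀ (y : G) (a b : Fin 2), a ≠ b → y ∈ P a → y ∉ P b :=
    fun y a b hab ha hb => Finset.disjoint_left.mp (hPdisj a b hab) ha hb
  have cover : ∀ (k : Fin 2), ∀ y ∈ P k, y ∈ Ai ∪ Aj := by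
    intro k y hy
    rw [← hPcov]
    exact Finset.mem_biUnion.mpr ⟨k, Finset.mem_univ k, hy⟩
  have mem2 : ∀ y ∈ Ai ∪ Aj, y ∈ P 0 ∨ y ∈ P 1 := by
    intro y hy
    rw [← hPcov] at hy
    obtain ⟨i, _, hi⟩ := Finset.mem_biUnion.mp hy
    fin_cases i
    · exact Or.inl hi
    · exact Or.inr hi
  have hgAj : gstar ∉ Aj := Finset.disjoint_left.mp hdisj hg
  have key : ∀ (k : Fin 2) (x : G), v x ≤ v gstar →
      (∀ y ∈ P k, y ∈ Ai.erase gstar ∨ y = x) → (P k).sum v ≤ Ai.sum v := by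
    intro k x hx hsub
    have hsub' : P k ⊆ insert x (Ai.erase gstar) := by
      intro y hy
      rcases hsub y hy with h | h
      · exact Finset.mem_insert_of_mem h
      · simp [h]
    have h1' : (P k).sum v ≤ (insert x (Ai.erase gstar)).sum v :=
      Finset.sum_le_sum_of_subset_of_nonneg hsub' (fun g _ _ => hv g)
    have h2' : (insert x (Ai.erase gstar)).sum v ≤ v x + (Ai.erase gstar).sum v := by
      by_cases hxm : x ∈ Ai.erase gstar
      · rw [Finset.insert_eq_self.mpr hxm]
        have := hv x; linarith
      · rw [Finset.sum_insert hxm]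
    have h3' : v gstar + (Ai.erase gstar).sum v = Ai.sum v := Finset.add_sum_erase _ _ hg
    linarith
  have h1m : h1 ∈ Ai ∪ Aj := by simp [hAj]
  have h2m : h2 ∈ Ai ∪ Aj := by simp [hAj]
  have h1Ai : h1 ∉ Ai := fun h => Finset.disjoint_left.mp hdisj h (by simp [hAj])
  have h2Ai : h2 ∉ Ai := fun h => Finset.disjoint_left.mp hdisj h (by simp [hAj])
  have goal : ∃ k : Fin 2, (P k).sum v ≤ Ai.sum v := by
    -- a part containing at most one of gstar, h1, h2
    have sub : ∀ (k : Fin 2) (x : G), (∀ y ∈ P k, y ∈ Aj → y = x) →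
        (gstar ∈ P k → gstar = x) → (∀ y ∈ P k, y ∈ Ai.erase gstar ∨ y = x) := by
      intro k x hAjx hgx y hy
      rcases Finset.mem_union.mp (cover k y hy) with hyAi | hyAj
      · by_cases hyg : y = gstar
        · subst hyg; exact Or.inr (hgx hy)
        · exact Or.inl (Finset.mem_erase.mpr ⟨hyg, hyAi⟩)
      · exact Or.inr (hAjx y hy hyAj)
    rcases mem2 h1 h1m with c1 | c1 <;> rcases mem2 h2 h2m with c2 | c2
    · -- both in P 0; take k = 1, x = gstar
      refine ⟨1, key 1 gstar le_rfl (sub 1 gstar ?_ (fun _ => rfl))⟩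
      intro y hy hyAj
      rw [hAj] at hyAj
      rcases Finset.mem_insert.mp hyAj with rfl | hyAj
      · exact absurd hy (notmem y 0 1 (by decide) c1)
      · rw [Finset.mem_singleton.mp hyAj] at hy
        exact absurd hy (notmem h2 0 1 (by decide) c2)
    · -- h1 ∈ P 0, h2 ∈ P 1; split on gstar
      rcases mem2 gstar (Finset.mem_union_left _ hg) with cg | cg
      · refine ⟨1, key 1 h2 (hmax h2 (by simp [hAj])) (sub 1 h2 ?_ ?_)⟩
        · intro y hy hyAj
          rw [hAj] at hyAj
          rcases Finset.mem_insert.mp hyAj with rfl | hyAj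
          · exact absurd hy (notmem y 0 1 (by decide) c1)
          · exact Finset.mem_singleton.mp hyAj
        · intro hgP; exact absurd hgP (notmem gstar 0 1 (by decide) cg)
      · refine ⟨0, key 0 h1 (hmax h1 (by simp [hAj])) (sub 0 h1 ?_ ?_)⟩
        · intro y hy hyAj
          rw [hAj] at hyAj
          rcases Finset.mem_insert.mp hyAj with rfl | hyAj
          · rfl
          · rw [Finset.mem_singleton.mp hyAj] at hy
            exact absurd hy (notmem h2 1 0 (by decide) c2)
        · intro hgP; exact absurd hgP (notmem gstar 1 0 (by decide) cg)
    · -- h1 ∈ P 1, h2 ∈ P 0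
      rcases mem2 gstar (Finset.mem_union_left _ hg) with cg | cg
      · refine ⟨1, key 1 h1 (hmax h1 (by simp [hAj])) (sub 1 h1 ?_ ?_)⟩
        · intro y hy hyAj
          rw [hAj] at hyAj
          rcases Finset.mem_insert.mp hyAj with rfl | hyAj
          · rfl
          · rw [Finset.mem_singleton.mp hyAj] at hy
            exact absurd hy (notmem h2 0 1 (by decide) c2)
        · intro hgP; exact absurd hgP (notmem gstar 0 1 (by decide) cg)
      · refine ⟨0, key 0 h2 (hmax h2 (by simp [hAj])) (sub 0 h2 ?_ ?_)⟩
        · intro y hy hyAj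
          rw [hAj] at hyAj
          rcases Finset.mem_insert.mp hyAj with rfl | hyAj
          · exact absurd hy (notmem y 1 0 (by decide) c1)
          · exact Finset.mem_singleton.mp hyAj
        · intro hgP; exact absurd hgP (notmem gstar 1 0 (by decide) cg)
    · -- both in P 1; take k = 0, x = gstar
      refine ⟨0, key 0 gstar le_rfl (sub 0 gstar ?_ (fun _ => rfl))⟩
      intro y hy hyAj
      rw [hAj] at hyAj
      rcases Finset.mem_insert.mp hyAj with rfl | hyAj
      · exact absurd hy (notmem y 1 0 (by decide) c1)
      · rw [Finset.mem_singleton.mp hyAj] at hy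
        exact absurd hy (notmem h2 1 0 (by decide) c2)
  obtain ⟨k, hk⟩ := goal
  exact le_trans (ciInf_le (Finite.bddBelow_range _) k) hk
end

section
/- There exists an instance showing α-GMMS does not imply (α+ε)-PMMS: for every α ∈ (0,1) and ε > 0, there exist two disjoint bundles A_1, A_2 and a nonnegative additive valuation v such that v(A_1) ≥ α · μ(2, A_1 ∪ A_2) but v(A_1) < (α + ε) · μ(2, A_1 ∪ A_2). Concretely, with A_1 consisting of 2k goods of value α/(2k) each and A_2 consisting of 2k goods of value (2−α)/(2k) each, one has μ(2, A_1 ∪ A_2) = 1 and v(A_1) = α, provided k is chosen so that bundles can be balanced (e.g., any k ≥ 1 works since each side can be split evenly). -/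
open Finset

variable {G : Type*} [DecidableEq G]

theorem IsPartition.sum_eq {n : ℕ} {P : Fin n → Finset G} {S : Finset G}
    (hP : IsPartition P S) (v : G → ℝ) :
    ∑ i, (P i).sum v = S.sum v := by
  rw [← hP.2, sum_biUnion fun i _ j _ hij => hP.1 i j hij]

theorem IsPartition.card_mul_iInf_le {n : ℕ} {P : Fin n → Finset G} {S : Finset G}
    (hP : IsPartition P S) (v : G → ℝ) :
    (n : ℝ) * ⨅ i, (P i).sum v ≤ S.sum v := by
  calc (n : ℝ) * ⨅ i, (P i).sum v = ∑ _i : Fin n, ⨅ i, (P i).sum v := by simp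
    _ ≤ ∑ i, (P i).sum v := sum_le_sum fun i _ => ciInf_le (Finite.bddBelow_range _) i
    _ = S.sum v := hP.sum_eq v

/-- Equal bundles are optimal: the smallest bundle of any partition is worth at most the average. -/
theorem mms_eq_of_isPartition {n : ℕ} [NeZero n] {P : Fin n → Finset G} {S : Finset G}
    (hP : IsPartition P S) {v : G → ℝ} {c : ℝ} (hc : ∀ i, (P i).sum v = c) :
    mms v n S = c := by
  have hn : (0 : ℝ) < n := by exact_mod_cast Nat.pos_of_neZero n
  have hS : S.sum v = n * c := by simp [← hP.sum_eq v, hc]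
  refine IsGreatest.csSup_eq ⟨⟨P, hP, by simp [hc]⟩, ?_⟩
  rintro _ ⟨Q, hQ, rfl⟩
  have hQavg := hQ.card_mul_iInf_le v
  rw [hS] at hQavg
  exact le_of_mul_le_mul_left hQavg hn

theorem stmt15 (α ε : ℝ) (hα0 : 0 < α) (hα1 : α < 1) (hε : 0 < ε) :
    ∃ (A₁ A₂ : Finset ℕ) (v : ℕ → ℝ),
      Disjoint A₁ A₂ ∧ (∀ g, 0 ≤ v g) ∧
      α * mms v 2 (A₁ ∪ A₂) ≤ A₁.sum v ∧
      A₁.sum v < (α + ε) * mms v 2 (A₁ ∪ A₂) := by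
  set v : ℕ → ℝ := fun g => if g < 2 then α / 2 else (2 - α) / 2
  have hP : IsPartition ![{0, 2}, {1, 3}] ({0, 1} ∪ {2, 3}) := by
    refine ⟨fun i j hij => ?_, by decide⟩
    fin_cases i <;> fin_cases j <;> simp_all
  have hmms : mms v 2 ({0, 1} ∪ {2, 3}) = 1 :=
    mms_eq_of_isPartition hP fun i => by fin_cases i <;> simp [v] <;> ring
  have hA₁ : ({0, 1} : Finset ℕ).sum v = α := by simp [v]
  refine ⟨{0, 1}, {2, 3}, v, by decide, fun g => ?_, ?_, ?_⟩
  · simp only [v]; split <;> linarith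
  · rw [hmms, hA₁, mul_one]
  · rw [hmms, hA₁]; linarith
end

section
/- Round-robin with two agents gives a 2/3-PMMS-type bound: if A_i and A_j are disjoint bundles such that A_j = {x, y} and A_i contains a good h with v_i(h) ≥ max{v_i(x), v_i(y)}, then 2 · μ_i(2, A_i ∪ A_j) ≤ 3 · v_i(A_i), i.e., v_i(A_i) ≥ (2/3) · μ_i(2, A_i ∪ A_j). -/
open Finset

variable {G : Type*} [DecidableEq G]

lemma mms_two_le {G : Type*} [DecidableEq G] (v : G → ℝ) (hv : ∀ g, 0 ≤ v g)
    (S : Finset G) : 2 * mms v 2 S ≤ S.sum v := by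
  have hS : 0 ≤ S.sum v := Finset.sum_nonneg fun g _ => hv g
  have : mms v 2 S ≤ S.sum v / 2 := by
    apply Real.sSup_le
    · rintro z ⟨P, hP, rfl⟩
      have hsum : (P 0).sum v + (P 1).sum v = S.sum v := by
        have := hP.2
        rw [← this, Finset.sum_biUnion]
        · simp [Fin.sum_univ_two]
        · intro i _ j _ hij
          exact hP.1 i j hij
      have h0 : (⨅ i : Fin 2, (P i).sum v) ≤ (P 0).sum v :=
        ciInf_le (Finite.bddBelow_range _) 0
      have h1 : (⨅ i : Fin 2, (P i).sum v) ≤ (P 1).sum v :=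
        ciInf_le (Finite.bddBelow_range _) 1
      linarith
    · linarith
  linarith

theorem stmt17 (v : G → ℝ) (hv : ∀ g, 0 ≤ v g) (Ai Aj : Finset G) (x y : G)
    (hxy : x ≠ y) (hAj : Aj = {x, y}) (hdisj : Disjoint Ai Aj)
    (h : G) (hh : h ∈ Ai) (hmax : max (v x) (v y) ≤ v h) :
    2 * mms v 2 (Ai ∪ Aj) ≤ 3 * Ai.sum v ∧
    (2 / 3 : ℝ) * mms v 2 (Ai ∪ Aj) ≤ Ai.sum v := by
  have hsumS : (Ai ∪ Aj).sum v = Ai.sum v + Aj.sum v :=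
    Finset.sum_union hdisj
  have hAjsum : Aj.sum v = v x + v y := by
    subst hAj; rw [Finset.sum_pair hxy]
  have hvh : v h ≤ Ai.sum v := Finset.single_le_sum (fun g _ => hv g) hh
  have hx : v x ≤ v h := le_trans (le_max_left _ _) hmax
  have hy : v y ≤ v h := le_trans (le_max_right _ _) hmax
  have key := mms_two_le v hv (Ai ∪ Aj)
  constructor <;> linarith
end
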